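/- The two polynomials Q1 and Q2 defining CL1 and CL2 are not projectively equivalent: there is no element g ∈ PGL(3,ℂ) and nonzero scalar λ with Q1∘g = λ·Q2. -/
import Mathlib

open MvPolynomial

noncomputable def Q1 : MvPolynomial (Fin 3) ℂ :=
  (X 0 ^ 2 + X 1 ^ 2 - 25 * X 2 ^ 2) * (X 0 - 4 * X 2) * (X 0 + 4 * X 2) *
    (3 * X 0 + 4 * X 1) * (X 0 + 3 * X 2) * (6 * X 0 + X 1 + 21 * X 2) * (X 1 + 3 * X 2)

noncomputable def Q2 : MvPolynomial (Fin 3) ℂ :=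
  (X 0 ^ 2 + X 1 ^ 2 - 25 * X 2 ^ 2) * (X 0 + 4 * X 2) * X 0 * (X 0 - 4 * X 2) *
    (X 1 - 3 * X 2) * (X 1 + 3 * X 2) * (3 * X 0 - 4 * X 1)

namespace Stmt16

noncomputable def Φ (p w : Fin 3 → ℂ) : MvPolynomial (Fin 3) ℂ →ₐ[ℂ] Polynomial ℂ :=
  MvPolynomial.aeval (fun i => Polynomial.C (p i) + Polynomial.X * Polynomial.C (w i))

def SingAt (Q : MvPolynomial (Fin 3) ℂ) (p : Fin 3 → ℂ) : Prop :=
  ∀ w : Fin 3 → ℂ, (Polynomial.X : Polynomial ℂ) ^ 2 ∣ Φ p w Q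

theorem coeff_zero_Φ (p w : Fin 3 → ℂ) (F : MvPolynomial (Fin 3) ℂ) :
    (Φ p w F).coeff 0 = MvPolynomial.eval p F := by
  rw [Polynomial.coeff_zero_eq_eval_zero]
  have h : (Polynomial.aeval (0 : ℂ)).comp (Φ p w) = MvPolynomial.aeval p := by
    apply MvPolynomial.algHom_ext
    intro i
    simp [Φ]
  have := congrArg (fun ψ => ψ F) h
  simpa [Polynomial.aeval_def, Polynomial.eval] using this

theorem X_dvd_Φ {p : Fin 3 → ℂ} (w : Fin 3 → ℂ) {F : MvPolynomial (Fin 3) ℂ}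
    (hF : MvPolynomial.eval p F = 0) : Polynomial.X ∣ Φ p w F :=
  Polynomial.X_dvd_iff.mpr (by rw [coeff_zero_Φ]; exact hF)

theorem singAt_of_two {Q A B R : MvPolynomial (Fin 3) ℂ} (h : Q = A * B * R)
    {p : Fin 3 → ℂ} (hA : MvPolynomial.eval p A = 0) (hB : MvPolynomial.eval p B = 0) :
    SingAt Q p := by
  intro w
  rw [h, map_mul, map_mul, sq]
  exact dvd_mul_of_dvd_left (mul_dvd_mul (X_dvd_Φ w hA) (X_dvd_Φ w hB)) _

/-- The six singular points of `Q2` lying on the line `x = 0`. -/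
noncomputable def P2s : Fin 6 → Fin 3 → ℂ :=
  ![![0,5,1], ![0,-5,1], ![0,3,1], ![0,-3,1], ![0,0,1], ![0,1,0]]

theorem sing_Q2 (k : Fin 6) : SingAt Q2 (P2s k) := by
  fin_cases k
  · show SingAt Q2 (![0,5,1] : Fin 3 → ℂ)
    exact singAt_of_two (A := X 0 ^ 2 + X 1 ^ 2 - 25 * X 2 ^ 2) (B := X 0)
      (R := (X 0 + 4 * X 2) * (X 0 - 4 * X 2) * (X 1 - 3 * X 2) * (X 1 + 3 * X 2) * (3 * X 0 - 4 * X 1)) (by unfold Q2; ring)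
      (by simp; try norm_num) (by simp; try norm_num)
  · show SingAt Q2 (![0,-5,1] : Fin 3 → ℂ)
    exact singAt_of_two (A := X 0 ^ 2 + X 1 ^ 2 - 25 * X 2 ^ 2) (B := X 0)
      (R := (X 0 + 4 * X 2) * (X 0 - 4 * X 2) * (X 1 - 3 * X 2) * (X 1 + 3 * X 2) * (3 * X 0 - 4 * X 1)) (by unfold Q2; ring)
      (by simp; try norm_num) (by simp; try norm_num)
  · show SingAt Q2 (![0,3,1] : Fin 3 → ℂ)
    exact singAt_of_two (A := X 0) (B := X 1 - 3 * X 2)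
      (R := (X 0 ^ 2 + X 1 ^ 2 - 25 * X 2 ^ 2) * (X 0 + 4 * X 2) * (X 0 - 4 * X 2) * (X 1 + 3 * X 2) * (3 * X 0 - 4 * X 1)) (by unfold Q2; ring)
      (by simp; try norm_num) (by simp; try norm_num)
  · show SingAt Q2 (![0,-3,1] : Fin 3 → ℂ)
    exact singAt_of_two (A := X 0) (B := X 1 + 3 * X 2)
      (R := (X 0 ^ 2 + X 1 ^ 2 - 25 * X 2 ^ 2) * (X 0 + 4 * X 2) * (X 0 - 4 * X 2) * (X 1 - 3 * X 2) * (3 * X 0 - 4 * X 1)) (by unfold Q2; ring)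
      (by simp; try norm_num) (by simp; try norm_num)
  · show SingAt Q2 (![0,0,1] : Fin 3 → ℂ)
    exact singAt_of_two (A := X 0) (B := 3 * X 0 - 4 * X 1)
      (R := (X 0 ^ 2 + X 1 ^ 2 - 25 * X 2 ^ 2) * (X 0 + 4 * X 2) * (X 0 - 4 * X 2) * (X 1 - 3 * X 2) * (X 1 + 3 * X 2)) (by unfold Q2; ring)
      (by simp; try norm_num) (by simp; try norm_num)
  · show SingAt Q2 (![0,1,0] : Fin 3 → ℂ)
    exact singAt_of_two (A := X 0 + 4 * X 2) (B := X 0)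
      (R := (X 0 ^ 2 + X 1 ^ 2 - 25 * X 2 ^ 2) * (X 0 - 4 * X 2) * (X 1 - 3 * X 2) * (X 1 + 3 * X 2) * (3 * X 0 - 4 * X 1)) (by unfold Q2; ring)
      (by simp; try norm_num) (by simp; try norm_num)

theorem Φ_bind₁ (M : Matrix (Fin 3) (Fin 3) ℂ) (p w : Fin 3 → ℂ) (Q : MvPolynomial (Fin 3) ℂ) :
    Φ p w (bind₁ (fun i : Fin 3 => ∑ j : Fin 3, C (M i j) * X j) Q)
      = Φ (M.mulVec p) (M.mulVec w) Q := by
  show (MvPolynomial.aeval _) (bind₁ _ Q) = (MvPolynomial.aeval _) Q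
  rw [MvPolynomial.aeval_bind₁]
  have : (fun i : Fin 3 =>
        (MvPolynomial.aeval fun i => Polynomial.C (p i) + Polynomial.X * Polynomial.C (w i))
          (∑ j : Fin 3, C (M i j) * X j))
      = fun i => Polynomial.C (M.mulVec p i) + Polynomial.X * Polynomial.C (M.mulVec w i) := by
    funext i
    simp only [map_sum, map_mul, MvPolynomial.aeval_C, MvPolynomial.aeval_X,
      Matrix.mulVec, dotProduct, Fin.sum_univ_three, Algebra.algebraMap_self,
      RingHom.id_apply, map_add]
    ring_nf
    simp [Polynomial.C_mul, Polynomial.C_add]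
    ring
  rw [this]

theorem transport {M : Matrix (Fin 3) (Fin 3) ℂ} (hM : IsUnit M.det) {lam : ℂ}
    (E : bind₁ (fun i : Fin 3 => ∑ j : Fin 3, C (M i j) * X j) Q1 = C lam * Q2)
    {p : Fin 3 → ℂ} (hp : SingAt Q2 p) : SingAt Q1 (M.mulVec p) := by
  intro w'
  have hw : M.mulVec ((M⁻¹).mulVec w') = w' := by
    rw [Matrix.mulVec_mulVec, Matrix.mul_nonsing_inv _ hM, Matrix.one_mulVec]
  set w : Fin 3 → ℂ := (M⁻¹).mulVec w' with hwdef
  have key : Φ (M.mulVec p) w' Q1 = Polynomial.C lam * Φ p w Q2 := by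
    have h1 := congrArg (Φ p w) E
    rw [Φ_bind₁, hw, map_mul] at h1
    rw [h1]
    congr 1
    simp [Φ]
  rw [key]
  exact Dvd.dvd.mul_left (hp w) _
theorem X2_cancel {A B : Polynomial ℂ} (hB : B.coeff 0 ≠ 0)
    (h : (Polynomial.X : Polynomial ℂ) ^ 2 ∣ A * B) : (Polynomial.X : Polynomial ℂ) ^ 2 ∣ A := by
  have hA0 : A.coeff 0 = 0 := by
    have h0 : (A * B).coeff 0 = 0 := by
      have : Polynomial.X ∣ A * B := dvd_trans (dvd_pow_self _ two_ne_zero) h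
      exact Polynomial.X_dvd_iff.mp this
    rw [Polynomial.mul_coeff_zero] at h0
    exact (mul_eq_zero.mp h0).resolve_right hB
  obtain ⟨A', rfl⟩ := Polynomial.X_dvd_iff.mpr hA0
  have h1 : Polynomial.X ∣ A' * B := by
    rw [sq, mul_assoc] at h
    exact (mul_dvd_mul_iff_left (Polynomial.X_ne_zero (R := ℂ))).mp h
  have hA'0 : A'.coeff 0 = 0 := by
    have := Polynomial.X_dvd_iff.mp h1
    rw [Polynomial.mul_coeff_zero] at this
    exact (mul_eq_zero.mp this).resolve_right hB
  obtain ⟨A'', rfl⟩ := Polynomial.X_dvd_iff.mpr hA'0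
  exact ⟨A'', by ring⟩

def PtsZ : Fin 11 → Fin 3 → ℤ :=
  ![![4,-3,1], ![-4,3,1], ![-4,-3,1], ![0,1,0], ![-3,-3,1], ![4,3,1],
    ![-3,4,1], ![-3,-4,1], ![-104,-153,37], ![4,-45,1], ![-12,9,4]]

noncomputable def Pts : Fin 11 → Fin 3 → ℂ := fun i j => ((PtsZ i j : ℤ) : ℂ)

theorem mk_aff {q : Fin 3 → ℂ} (hq : q ≠ 0) (i : Fin 11) (α β γ : ℂ) (hγ : γ ≠ 0)
    (hP : (fun j => ((PtsZ i j : ℤ) : ℂ)) = ![α, β, γ])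
    (hx : γ * q 0 = α * q 2) (hy : γ * q 1 = β * q 2) :
    ∃ (i : Fin 11) (c : ℂ), c ≠ 0 ∧ q = c • Pts i := by
  have hqe : q = ![q 0, q 1, q 2] := by funext j; fin_cases j <;> rfl
  have hz : q 2 ≠ 0 := by
    intro h2
    apply hq
    have h0 : q 0 = 0 := by
      have := hx; rw [h2, mul_zero] at this
      exact (mul_eq_zero.mp this).resolve_left hγ
    have h1 : q 1 = 0 := by
      have := hy; rw [h2, mul_zero] at this
      exact (mul_eq_zero.mp this).resolve_left hγ
    rw [hqe, h0, h1, h2]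
    funext j; fin_cases j <;> simp
  refine ⟨i, q 2 / γ, div_ne_zero hz hγ, ?_⟩
  have hPts : Pts i = ![α, β, γ] := hP
  rw [hPts, hqe]
  funext j; fin_cases j
  · show q 0 = q 2 / γ * α
    field_simp
    linear_combination hx
  · show q 1 = q 2 / γ * β
    field_simp
    linear_combination hy
  · show q 2 = q 2 / γ * γ
    rw [div_mul_cancel₀ _ hγ]

theorem mk_inf {q : Fin 3 → ℂ} (hq : q ≠ 0) (hx : q 0 = 0) (hz : q 2 = 0) :
    ∃ (i : Fin 11) (c : ℂ), c ≠ 0 ∧ q = c • Pts i := by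
  have hqe : q = ![q 0, q 1, q 2] := by funext j; fin_cases j <;> rfl
  refine ⟨3, q 1, ?_, ?_⟩
  · intro h1
    apply hq
    rw [hqe, hx, h1, hz]
    funext j; fin_cases j <;> simp
  · have hPts : Pts 3 = ![0, 1, 0] := by
      funext j; fin_cases j <;> simp [Pts, PtsZ]
    rw [hPts, hqe, hx, hz]
    funext j; fin_cases j <;> simp

theorem lin_second {q : Fin 3 → ℂ} (h : SingAt Q1 q) {L R : MvPolynomial (Fin 3) ℂ}
    (hfac : Q1 = L * R) (hR : MvPolynomial.eval q R ≠ 0) (w : Fin 3 → ℂ) (lv : ℂ)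
    (hlv : lv ≠ 0) (hform : Φ q w L = Polynomial.X * Polynomial.C lv) : False := by
  have h2 := h w
  rw [hfac, map_mul] at h2
  have hX2 := X2_cancel (by rw [coeff_zero_Φ]; exact hR) h2
  rw [hform] at hX2
  have hXd : (Polynomial.X : Polynomial ℂ) ∣ Polynomial.C lv := by
    have h3 : (Polynomial.X : Polynomial ℂ) * Polynomial.X ∣
        Polynomial.X * Polynomial.C lv := by rwa [← sq]
    exact (mul_dvd_mul_iff_left (Polynomial.X_ne_zero (R := ℂ))).mp h3
  rw [Polynomial.X_dvd_iff, Polynomial.coeff_C] at hXd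
  simp at hXd
  exact hlv hXd

theorem conic_second {q : Fin 3 → ℂ} (h : SingAt Q1 q) {R : MvPolynomial (Fin 3) ℂ}
    (hfac : Q1 = (X 0 ^ 2 + X 1 ^ 2 - 25 * X 2 ^ 2) * R)
    (hA : q 0 ^ 2 + q 1 ^ 2 - 25 * q 2 ^ 2 = 0)
    (hR : MvPolynomial.eval q R ≠ 0) : q = 0 := by
  have key : ∀ w : Fin 3 → ℂ, 2 * q 0 * w 0 + 2 * q 1 * w 1 - 50 * q 2 * w 2 = 0 := by
    intro w
    have h2 := h w
    rw [hfac, map_mul] at h2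
    have hX2 := X2_cancel (by rw [coeff_zero_Φ]; exact hR) h2
    have hform : Φ q w (X 0 ^ 2 + X 1 ^ 2 - 25 * X 2 ^ 2) =
        Polynomial.C (q 0 ^ 2 + q 1 ^ 2 - 25 * q 2 ^ 2) +
          (Polynomial.X * Polynomial.C (2 * q 0 * w 0 + 2 * q 1 * w 1 - 50 * q 2 * w 2) +
            Polynomial.X ^ 2 * Polynomial.C (w 0 ^ 2 + w 1 ^ 2 - 25 * w 2 ^ 2)) := by
      simp [Φ, map_ofNat]; ring
    rw [hform, hA, map_zero, zero_add] at hX2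
    have h3 : (Polynomial.X : Polynomial ℂ) ^ 2 ∣
        Polynomial.X * Polynomial.C (2 * q 0 * w 0 + 2 * q 1 * w 1 - 50 * q 2 * w 2) := by
      have h4 := dvd_sub hX2 (dvd_mul_right ((Polynomial.X : Polynomial ℂ) ^ 2) (Polynomial.C (w 0 ^ 2 + w 1 ^ 2 - 25 * w 2 ^ 2)))
      simpa using h4
    have hXd : (Polynomial.X : Polynomial ℂ) ∣
        Polynomial.C (2 * q 0 * w 0 + 2 * q 1 * w 1 - 50 * q 2 * w 2) := by
      have h5 : (Polynomial.X : Polynomial ℂ) * Polynomial.X ∣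
          Polynomial.X * Polynomial.C (2 * q 0 * w 0 + 2 * q 1 * w 1 - 50 * q 2 * w 2) := by
        rwa [← sq]
      exact (mul_dvd_mul_iff_left (Polynomial.X_ne_zero (R := ℂ))).mp h5
    rw [Polynomial.X_dvd_iff, Polynomial.coeff_C] at hXd
    simpa using hXd
  have h0 : q 0 = 0 := by have := key ![1,0,0]; simpa using this
  have h1 : q 1 = 0 := by have := key ![0,1,0]; simpa using this
  have h2 : q 2 = 0 := by have := key ![0,0,1]; simpa using this
  have hqe : q = ![q 0, q 1, q 2] := by funext j; fin_cases j <;> rfl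
  rw [hqe, h0, h1, h2]
  funext j; fin_cases j <;> simp

set_option maxHeartbeats 2000000 in
theorem classify {q : Fin 3 → ℂ} (hq : q ≠ 0) (h : SingAt Q1 q) :
    ∃ (i : Fin 11) (c : ℂ), c ≠ 0 ∧ q = c • Pts i := by
  have hQ10 : MvPolynomial.eval q Q1 = 0 := by
    rw [← coeff_zero_Φ q 0]
    exact Polynomial.X_dvd_iff.mp (dvd_trans (dvd_pow_self _ two_ne_zero) (h 0))
  have hprod : (q 0 ^ 2 + q 1 ^ 2 - 25 * q 2 ^ 2) * ((q 0 - 4 * q 2) * ((q 0 + 4 * q 2) * ((3 * q 0 + 4 * q 1) * ((q 0 + 3 * q 2) * ((6 * q 0 + q 1 + 21 * q 2) * ((q 1 + 3 * q 2))))))) = 0 := by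
    rw [← hQ10]; simp [Q1]; ring
  rcases mul_eq_zero.mp hprod with hA0 | hR0
  · -- factor 0 = 0
    have h6 : (q 0 - 4 * q 2) * ((q 0 + 4 * q 2) * ((3 * q 0 + 4 * q 1) * ((q 0 + 3 * q 2) * ((6 * q 0 + q 1 + 21 * q 2) * ((q 1 + 3 * q 2)))))) = 0 := by
      by_contra hne
      have hRne : MvPolynomial.eval q ((X 0 - 4 * X 2) * ((X 0 + 4 * X 2) * ((3 * X 0 + 4 * X 1) * ((X 0 + 3 * X 2) * ((6 * X 0 + X 1 + 21 * X 2) * ((X 1 + 3 * X 2))))))) ≠ 0 := by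
        rwa [show MvPolynomial.eval q ((X 0 - 4 * X 2) * ((X 0 + 4 * X 2) * ((3 * X 0 + 4 * X 1) * ((X 0 + 3 * X 2) * ((6 * X 0 + X 1 + 21 * X 2) * ((X 1 + 3 * X 2))))))) = (q 0 - 4 * q 2) * ((q 0 + 4 * q 2) * ((3 * q 0 + 4 * q 1) * ((q 0 + 3 * q 2) * ((6 * q 0 + q 1 + 21 * q 2) * ((q 1 + 3 * q 2)))))) from by simp; try ring]
      exact hq (conic_second h (by unfold Q1; ring) hA0 hRne)
    rcases mul_eq_zero.mp h6 with hZ1 | h5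
    · -- pair (0, 1)
      have hsp : (q 1 - 3 * q 2) * (q 1 + 3 * q 2) = 0 := by linear_combination hA0 - (q 0 + 4 * q 2) * hZ1
      rcases mul_eq_zero.mp hsp with hc | hc
      · exact mk_aff hq 5 4 3 1 (by norm_num) (by funext j; fin_cases j <;> norm_num [show PtsZ 5 = ![4, 3, 1] from rfl]) (by linear_combination hZ1) (by linear_combination hc)
      · exact mk_aff hq 0 4 (-3) 1 (by norm_num) (by funext j; fin_cases j <;> norm_num [show PtsZ 0 = ![4, (-3), 1] from rfl]) (by linear_combination hZ1) (by linear_combination hc)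
    rcases mul_eq_zero.mp h5 with hZ2 | h4
    · -- pair (0, 2)
      have hsp : (q 1 - 3 * q 2) * (q 1 + 3 * q 2) = 0 := by linear_combination hA0 - (q 0 - 4 * q 2) * hZ2
      rcases mul_eq_zero.mp hsp with hc | hc
      · exact mk_aff hq 1 (-4) 3 1 (by norm_num) (by funext j; fin_cases j <;> norm_num [show PtsZ 1 = ![(-4), 3, 1] from rfl]) (by linear_combination hZ2) (by linear_combination hc)
      · exact mk_aff hq 2 (-4) (-3) 1 (by norm_num) (by funext j; fin_cases j <;> norm_num [show PtsZ 2 = ![(-4), (-3), 1] from rfl]) (by linear_combination hZ2) (by linear_combination hc)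
    rcases mul_eq_zero.mp h4 with hZ3 | h3
    · -- pair (0, 3)
      have hsp : (q 0 - 4 * q 2) * (q 0 + 4 * q 2) = 0 := by linear_combination (16/25) * hA0 - ((4 * q 1 - 3 * q 0)/25) * hZ3
      rcases mul_eq_zero.mp hsp with hc | hc
      · exact mk_aff hq 0 4 (-3) 1 (by norm_num) (by funext j; fin_cases j <;> norm_num [show PtsZ 0 = ![4, (-3), 1] from rfl]) (by linear_combination hc) (by linear_combination hZ3/4 - (3/4) * hc)
      · exact mk_aff hq 1 (-4) 3 1 (by norm_num) (by funext j; fin_cases j <;> norm_num [show PtsZ 1 = ![(-4), 3, 1] from rfl]) (by linear_combination hc) (by linear_combination hZ3/4 - (3/4) * hc)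
    rcases mul_eq_zero.mp h3 with hZ4 | h2
    · -- pair (0, 4)
      have hsp : (q 1 - 4 * q 2) * (q 1 + 4 * q 2) = 0 := by linear_combination hA0 - (q 0 - 3 * q 2) * hZ4
      rcases mul_eq_zero.mp hsp with hc | hc
      · exact mk_aff hq 6 (-3) 4 1 (by norm_num) (by funext j; fin_cases j <;> norm_num [show PtsZ 6 = ![(-3), 4, 1] from rfl]) (by linear_combination hZ4) (by linear_combination hc)
      · exact mk_aff hq 7 (-3) (-4) 1 (by norm_num) (by funext j; fin_cases j <;> norm_num [show PtsZ 7 = ![(-3), (-4), 1] from rfl]) (by linear_combination hZ4) (by linear_combination hc)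
    rcases mul_eq_zero.mp h2 with hZ5 | h1
    · -- pair (0, 5)
      have hsp : (q 0 + 4 * q 2) * (37 * q 0 + 104 * q 2) = 0 := by linear_combination hA0 - (q 1 - 6 * q 0 - 21 * q 2) * hZ5
      rcases mul_eq_zero.mp hsp with hc | hc
      · exact mk_aff hq 1 (-4) 3 1 (by norm_num) (by funext j; fin_cases j <;> norm_num [show PtsZ 1 = ![(-4), 3, 1] from rfl]) (by linear_combination hc) (by linear_combination hZ5 - 6 * hc)
      · exact mk_aff hq 8 (-104) (-153) 37 (by norm_num) (by funext j; fin_cases j <;> norm_num [show PtsZ 8 = ![(-104), (-153), 37] from rfl]) (by linear_combination hc) (by linear_combination 37 * hZ5 - 6 * hc)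
    -- last: h1 : factor 6 = 0
    have hsp : (q 0 - 4 * q 2) * (q 0 + 4 * q 2) = 0 := by linear_combination hA0 - (q 1 - 3 * q 2) * h1
    rcases mul_eq_zero.mp hsp with hc | hc
    · exact mk_aff hq 0 4 (-3) 1 (by norm_num) (by funext j; fin_cases j <;> norm_num [show PtsZ 0 = ![4, (-3), 1] from rfl]) (by linear_combination hc) (by linear_combination h1)
    · exact mk_aff hq 2 (-4) (-3) 1 (by norm_num) (by funext j; fin_cases j <;> norm_num [show PtsZ 2 = ![(-4), (-3), 1] from rfl]) (by linear_combination hc) (by linear_combination h1)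
  rcases mul_eq_zero.mp hR0 with hA1 | hR1
  · -- factor 1 = 0
    have h6 : (q 0 ^ 2 + q 1 ^ 2 - 25 * q 2 ^ 2) * ((q 0 + 4 * q 2) * ((3 * q 0 + 4 * q 1) * ((q 0 + 3 * q 2) * ((6 * q 0 + q 1 + 21 * q 2) * ((q 1 + 3 * q 2)))))) = 0 := by
      by_contra hne
      have hRne : MvPolynomial.eval q ((X 0 ^ 2 + X 1 ^ 2 - 25 * X 2 ^ 2) * ((X 0 + 4 * X 2) * ((3 * X 0 + 4 * X 1) * ((X 0 + 3 * X 2) * ((6 * X 0 + X 1 + 21 * X 2) * ((X 1 + 3 * X 2))))))) ≠ 0 := by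
        rwa [show MvPolynomial.eval q ((X 0 ^ 2 + X 1 ^ 2 - 25 * X 2 ^ 2) * ((X 0 + 4 * X 2) * ((3 * X 0 + 4 * X 1) * ((X 0 + 3 * X 2) * ((6 * X 0 + X 1 + 21 * X 2) * ((X 1 + 3 * X 2))))))) = (q 0 ^ 2 + q 1 ^ 2 - 25 * q 2 ^ 2) * ((q 0 + 4 * q 2) * ((3 * q 0 + 4 * q 1) * ((q 0 + 3 * q 2) * ((6 * q 0 + q 1 + 21 * q 2) * ((q 1 + 3 * q 2)))))) from by simp; try ring]
      have hCz : (Polynomial.C (q 0 - 4 * q 2) : Polynomial ℂ) = 0 := by rw [hA1]; exact map_zero _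
      simp only [map_add, map_sub, map_mul, map_ofNat] at hCz
      exact lin_second h (L := X 0 - 4 * X 2) (R := (X 0 ^ 2 + X 1 ^ 2 - 25 * X 2 ^ 2) * ((X 0 + 4 * X 2) * ((3 * X 0 + 4 * X 1) * ((X 0 + 3 * X 2) * ((6 * X 0 + X 1 + 21 * X 2) * ((X 1 + 3 * X 2))))))) (by unfold Q1; ring) hRne ![1,0,0] 1 (by norm_num)
        (by simp [Φ, map_ofNat]; try linear_combination hCz)
    rcases mul_eq_zero.mp h6 with hZ0 | h5
    · -- pair (1, 0)
      have hsp : (q 1 - 3 * q 2) * (q 1 + 3 * q 2) = 0 := by linear_combination hZ0 - (q 0 + 4 * q 2) * hA1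
      rcases mul_eq_zero.mp hsp with hc | hc
      · exact mk_aff hq 5 4 3 1 (by norm_num) (by funext j; fin_cases j <;> norm_num [show PtsZ 5 = ![4, 3, 1] from rfl]) (by linear_combination hA1) (by linear_combination hc)
      · exact mk_aff hq 0 4 (-3) 1 (by norm_num) (by funext j; fin_cases j <;> norm_num [show PtsZ 0 = ![4, (-3), 1] from rfl]) (by linear_combination hA1) (by linear_combination hc)
    rcases mul_eq_zero.mp h5 with hZ2 | h4
    · -- pair (1, 2)
      exact mk_inf hq (by linear_combination hA1/2 + hZ2/2) (by linear_combination hZ2/8 - hA1/8)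
    rcases mul_eq_zero.mp h4 with hZ3 | h3
    · -- pair (1, 3)
      exact mk_aff hq 0 4 (-3) 1 (by norm_num) (by funext j; fin_cases j <;> norm_num [show PtsZ 0 = ![4, (-3), 1] from rfl]) (by linear_combination hA1) (by linear_combination hZ3/4 - (3/4) * hA1)
    rcases mul_eq_zero.mp h3 with hZ4 | h2
    · -- pair (1, 4)
      exact mk_inf hq (by linear_combination (3/7) * hA1 + (4/7) * hZ4) (by linear_combination hZ4/7 - hA1/7)
    rcases mul_eq_zero.mp h2 with hZ5 | h1
    · -- pair (1, 5)
      exact mk_aff hq 9 4 (-45) 1 (by norm_num) (by funext j; fin_cases j <;> norm_num [show PtsZ 9 = ![4, (-45), 1] from rfl]) (by linear_combination hA1) (by linear_combination hZ5 - 6 * hA1)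
    -- last: h1 : factor 6 = 0
    exact mk_aff hq 0 4 (-3) 1 (by norm_num) (by funext j; fin_cases j <;> norm_num [show PtsZ 0 = ![4, (-3), 1] from rfl]) (by linear_combination hA1) (by linear_combination h1)
  rcases mul_eq_zero.mp hR1 with hA2 | hR2
  · -- factor 2 = 0
    have h6 : (q 0 ^ 2 + q 1 ^ 2 - 25 * q 2 ^ 2) * ((q 0 - 4 * q 2) * ((3 * q 0 + 4 * q 1) * ((q 0 + 3 * q 2) * ((6 * q 0 + q 1 + 21 * q 2) * ((q 1 + 3 * q 2)))))) = 0 := by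
      by_contra hne
      have hRne : MvPolynomial.eval q ((X 0 ^ 2 + X 1 ^ 2 - 25 * X 2 ^ 2) * ((X 0 - 4 * X 2) * ((3 * X 0 + 4 * X 1) * ((X 0 + 3 * X 2) * ((6 * X 0 + X 1 + 21 * X 2) * ((X 1 + 3 * X 2))))))) ≠ 0 := by
        rwa [show MvPolynomial.eval q ((X 0 ^ 2 + X 1 ^ 2 - 25 * X 2 ^ 2) * ((X 0 - 4 * X 2) * ((3 * X 0 + 4 * X 1) * ((X 0 + 3 * X 2) * ((6 * X 0 + X 1 + 21 * X 2) * ((X 1 + 3 * X 2))))))) = (q 0 ^ 2 + q 1 ^ 2 - 25 * q 2 ^ 2) * ((q 0 - 4 * q 2) * ((3 * q 0 + 4 * q 1) * ((q 0 + 3 * q 2) * ((6 * q 0 + q 1 + 21 * q 2) * ((q 1 + 3 * q 2)))))) from by simp; try ring]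
      have hCz : (Polynomial.C (q 0 + 4 * q 2) : Polynomial ℂ) = 0 := by rw [hA2]; exact map_zero _
      simp only [map_add, map_sub, map_mul, map_ofNat] at hCz
      exact lin_second h (L := X 0 + 4 * X 2) (R := (X 0 ^ 2 + X 1 ^ 2 - 25 * X 2 ^ 2) * ((X 0 - 4 * X 2) * ((3 * X 0 + 4 * X 1) * ((X 0 + 3 * X 2) * ((6 * X 0 + X 1 + 21 * X 2) * ((X 1 + 3 * X 2))))))) (by unfold Q1; ring) hRne ![1,0,0] 1 (by norm_num)
        (by simp [Φ, map_ofNat]; try linear_combination hCz)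
    rcases mul_eq_zero.mp h6 with hZ0 | h5
    · -- pair (2, 0)
      have hsp : (q 1 - 3 * q 2) * (q 1 + 3 * q 2) = 0 := by linear_combination hZ0 - (q 0 - 4 * q 2) * hA2
      rcases mul_eq_zero.mp hsp with hc | hc
      · exact mk_aff hq 1 (-4) 3 1 (by norm_num) (by funext j; fin_cases j <;> norm_num [show PtsZ 1 = ![(-4), 3, 1] from rfl]) (by linear_combination hA2) (by linear_combination hc)
      · exact mk_aff hq 2 (-4) (-3) 1 (by norm_num) (by funext j; fin_cases j <;> norm_num [show PtsZ 2 = ![(-4), (-3), 1] from rfl]) (by linear_combination hA2) (by linear_combination hc)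
    rcases mul_eq_zero.mp h5 with hZ1 | h4
    · -- pair (2, 1)
      exact mk_inf hq (by linear_combination hZ1/2 + hA2/2) (by linear_combination hA2/8 - hZ1/8)
    rcases mul_eq_zero.mp h4 with hZ3 | h3
    · -- pair (2, 3)
      exact mk_aff hq 1 (-4) 3 1 (by norm_num) (by funext j; fin_cases j <;> norm_num [show PtsZ 1 = ![(-4), 3, 1] from rfl]) (by linear_combination hA2) (by linear_combination hZ3/4 - (3/4) * hA2)
    rcases mul_eq_zero.mp h3 with hZ4 | h2
    · -- pair (2, 4)
      exact mk_inf hq (by linear_combination 4 * hZ4 - 3 * hA2) (by linear_combination hA2 - hZ4)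
    rcases mul_eq_zero.mp h2 with hZ5 | h1
    · -- pair (2, 5)
      exact mk_aff hq 1 (-4) 3 1 (by norm_num) (by funext j; fin_cases j <;> norm_num [show PtsZ 1 = ![(-4), 3, 1] from rfl]) (by linear_combination hA2) (by linear_combination hZ5 - 6 * hA2)
    -- last: h1 : factor 6 = 0
    exact mk_aff hq 2 (-4) (-3) 1 (by norm_num) (by funext j; fin_cases j <;> norm_num [show PtsZ 2 = ![(-4), (-3), 1] from rfl]) (by linear_combination hA2) (by linear_combination h1)
  rcases mul_eq_zero.mp hR2 with hA3 | hR3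
  · -- factor 3 = 0
    have h6 : (q 0 ^ 2 + q 1 ^ 2 - 25 * q 2 ^ 2) * ((q 0 - 4 * q 2) * ((q 0 + 4 * q 2) * ((q 0 + 3 * q 2) * ((6 * q 0 + q 1 + 21 * q 2) * ((q 1 + 3 * q 2)))))) = 0 := by
      by_contra hne
      have hRne : MvPolynomial.eval q ((X 0 ^ 2 + X 1 ^ 2 - 25 * X 2 ^ 2) * ((X 0 - 4 * X 2) * ((X 0 + 4 * X 2) * ((X 0 + 3 * X 2) * ((6 * X 0 + X 1 + 21 * X 2) * ((X 1 + 3 * X 2))))))) ≠ 0 := by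
        rwa [show MvPolynomial.eval q ((X 0 ^ 2 + X 1 ^ 2 - 25 * X 2 ^ 2) * ((X 0 - 4 * X 2) * ((X 0 + 4 * X 2) * ((X 0 + 3 * X 2) * ((6 * X 0 + X 1 + 21 * X 2) * ((X 1 + 3 * X 2))))))) = (q 0 ^ 2 + q 1 ^ 2 - 25 * q 2 ^ 2) * ((q 0 - 4 * q 2) * ((q 0 + 4 * q 2) * ((q 0 + 3 * q 2) * ((6 * q 0 + q 1 + 21 * q 2) * ((q 1 + 3 * q 2)))))) from by simp; try ring]
      have hCz : (Polynomial.C (3 * q 0 + 4 * q 1) : Polynomial ℂ) = 0 := by rw [hA3]; exact map_zero _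
      simp only [map_add, map_sub, map_mul, map_ofNat] at hCz
      exact lin_second h (L := 3 * X 0 + 4 * X 1) (R := (X 0 ^ 2 + X 1 ^ 2 - 25 * X 2 ^ 2) * ((X 0 - 4 * X 2) * ((X 0 + 4 * X 2) * ((X 0 + 3 * X 2) * ((6 * X 0 + X 1 + 21 * X 2) * ((X 1 + 3 * X 2))))))) (by unfold Q1; ring) hRne ![1,0,0] 3 (by norm_num)
        (by simp [Φ, map_ofNat]; try linear_combination hCz)
    rcases mul_eq_zero.mp h6 with hZ0 | h5
    · -- pair (3, 0)
      have hsp : (q 0 - 4 * q 2) * (q 0 + 4 * q 2) = 0 := by linear_combination (16/25) * hZ0 - ((4 * q 1 - 3 * q 0)/25) * hA3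
      rcases mul_eq_zero.mp hsp with hc | hc
      · exact mk_aff hq 0 4 (-3) 1 (by norm_num) (by funext j; fin_cases j <;> norm_num [show PtsZ 0 = ![4, (-3), 1] from rfl]) (by linear_combination hc) (by linear_combination hA3/4 - (3/4) * hc)
      · exact mk_aff hq 1 (-4) 3 1 (by norm_num) (by funext j; fin_cases j <;> norm_num [show PtsZ 1 = ![(-4), 3, 1] from rfl]) (by linear_combination hc) (by linear_combination hA3/4 - (3/4) * hc)
    rcases mul_eq_zero.mp h5 with hZ1 | h4
    · -- pair (3, 1)
      exact mk_aff hq 0 4 (-3) 1 (by norm_num) (by funext j; fin_cases j <;> norm_num [show PtsZ 0 = ![4, (-3), 1] from rfl]) (by linear_combination hZ1) (by linear_combination hA3/4 - (3/4) * hZ1)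
    rcases mul_eq_zero.mp h4 with hZ2 | h3
    · -- pair (3, 2)
      exact mk_aff hq 1 (-4) 3 1 (by norm_num) (by funext j; fin_cases j <;> norm_num [show PtsZ 1 = ![(-4), 3, 1] from rfl]) (by linear_combination hZ2) (by linear_combination hA3/4 - (3/4) * hZ2)
    rcases mul_eq_zero.mp h3 with hZ4 | h2
    · -- pair (3, 4)
      exact mk_aff hq 10 (-12) 9 4 (by norm_num) (by funext j; fin_cases j <;> norm_num [show PtsZ 10 = ![(-12), 9, 4] from rfl]) (by linear_combination 4 * hZ4) (by linear_combination hA3 - 3 * hZ4)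
    rcases mul_eq_zero.mp h2 with hZ5 | h1
    · -- pair (3, 5)
      have hx : q 0 + 4 * q 2 = 0 := by linear_combination (4/21) * hZ5 - (1/21) * hA3
      exact mk_aff hq 1 (-4) 3 1 (by norm_num) (by funext j; fin_cases j <;> norm_num [show PtsZ 1 = ![(-4), 3, 1] from rfl]) (by linear_combination hx) (by linear_combination (1/4) * hA3 - (3/4) * hx)
    -- last: h1 : factor 6 = 0
    exact mk_aff hq 0 4 (-3) 1 (by norm_num) (by funext j; fin_cases j <;> norm_num [show PtsZ 0 = ![4, (-3), 1] from rfl]) (by linear_combination (1/3) * hA3 - (4/3) * h1) (by linear_combination h1)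
  rcases mul_eq_zero.mp hR3 with hA4 | hR4
  · -- factor 4 = 0
    have h6 : (q 0 ^ 2 + q 1 ^ 2 - 25 * q 2 ^ 2) * ((q 0 - 4 * q 2) * ((q 0 + 4 * q 2) * ((3 * q 0 + 4 * q 1) * ((6 * q 0 + q 1 + 21 * q 2) * ((q 1 + 3 * q 2)))))) = 0 := by
      by_contra hne
      have hRne : MvPolynomial.eval q ((X 0 ^ 2 + X 1 ^ 2 - 25 * X 2 ^ 2) * ((X 0 - 4 * X 2) * ((X 0 + 4 * X 2) * ((3 * X 0 + 4 * X 1) * ((6 * X 0 + X 1 + 21 * X 2) * ((X 1 + 3 * X 2))))))) ≠ 0 := by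
        rwa [show MvPolynomial.eval q ((X 0 ^ 2 + X 1 ^ 2 - 25 * X 2 ^ 2) * ((X 0 - 4 * X 2) * ((X 0 + 4 * X 2) * ((3 * X 0 + 4 * X 1) * ((6 * X 0 + X 1 + 21 * X 2) * ((X 1 + 3 * X 2))))))) = (q 0 ^ 2 + q 1 ^ 2 - 25 * q 2 ^ 2) * ((q 0 - 4 * q 2) * ((q 0 + 4 * q 2) * ((3 * q 0 + 4 * q 1) * ((6 * q 0 + q 1 + 21 * q 2) * ((q 1 + 3 * q 2)))))) from by simp; try ring]
      have hCz : (Polynomial.C (q 0 + 3 * q 2) : Polynomial ℂ) = 0 := by rw [hA4]; exact map_zero _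
      simp only [map_add, map_sub, map_mul, map_ofNat] at hCz
      exact lin_second h (L := X 0 + 3 * X 2) (R := (X 0 ^ 2 + X 1 ^ 2 - 25 * X 2 ^ 2) * ((X 0 - 4 * X 2) * ((X 0 + 4 * X 2) * ((3 * X 0 + 4 * X 1) * ((6 * X 0 + X 1 + 21 * X 2) * ((X 1 + 3 * X 2))))))) (by unfold Q1; ring) hRne ![1,0,0] 1 (by norm_num)
        (by simp [Φ, map_ofNat]; try linear_combination hCz)
    rcases mul_eq_zero.mp h6 with hZ0 | h5
    · -- pair (4, 0)
      have hsp : (q 1 - 4 * q 2) * (q 1 + 4 * q 2) = 0 := by linear_combination hZ0 - (q 0 - 3 * q 2) * hA4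
      rcases mul_eq_zero.mp hsp with hc | hc
      · exact mk_aff hq 6 (-3) 4 1 (by norm_num) (by funext j; fin_cases j <;> norm_num [show PtsZ 6 = ![(-3), 4, 1] from rfl]) (by linear_combination hA4) (by linear_combination hc)
      · exact mk_aff hq 7 (-3) (-4) 1 (by norm_num) (by funext j; fin_cases j <;> norm_num [show PtsZ 7 = ![(-3), (-4), 1] from rfl]) (by linear_combination hA4) (by linear_combination hc)
    rcases mul_eq_zero.mp h5 with hZ1 | h4
    · -- pair (4, 1)
      exact mk_inf hq (by linear_combination (3/7) * hZ1 + (4/7) * hA4) (by linear_combination hA4/7 - hZ1/7)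
    rcases mul_eq_zero.mp h4 with hZ2 | h3
    · -- pair (4, 2)
      exact mk_inf hq (by linear_combination 4 * hA4 - 3 * hZ2) (by linear_combination hZ2 - hA4)
    rcases mul_eq_zero.mp h3 with hZ3 | h2
    · -- pair (4, 3)
      exact mk_aff hq 10 (-12) 9 4 (by norm_num) (by funext j; fin_cases j <;> norm_num [show PtsZ 10 = ![(-12), 9, 4] from rfl]) (by linear_combination 4 * hA4) (by linear_combination hZ3 - 3 * hA4)
    rcases mul_eq_zero.mp h2 with hZ5 | h1
    · -- pair (4, 5)
      exact mk_aff hq 4 (-3) (-3) 1 (by norm_num) (by funext j; fin_cases j <;> norm_num [show PtsZ 4 = ![(-3), (-3), 1] from rfl]) (by linear_combination hA4) (by linear_combination hZ5 - 6 * hA4)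
    -- last: h1 : factor 6 = 0
    exact mk_aff hq 4 (-3) (-3) 1 (by norm_num) (by funext j; fin_cases j <;> norm_num [show PtsZ 4 = ![(-3), (-3), 1] from rfl]) (by linear_combination hA4) (by linear_combination h1)
  rcases mul_eq_zero.mp hR4 with hA5 | hR5
  · -- factor 5 = 0
    have h6 : (q 0 ^ 2 + q 1 ^ 2 - 25 * q 2 ^ 2) * ((q 0 - 4 * q 2) * ((q 0 + 4 * q 2) * ((3 * q 0 + 4 * q 1) * ((q 0 + 3 * q 2) * ((q 1 + 3 * q 2)))))) = 0 := by
      by_contra hne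
      have hRne : MvPolynomial.eval q ((X 0 ^ 2 + X 1 ^ 2 - 25 * X 2 ^ 2) * ((X 0 - 4 * X 2) * ((X 0 + 4 * X 2) * ((3 * X 0 + 4 * X 1) * ((X 0 + 3 * X 2) * ((X 1 + 3 * X 2))))))) ≠ 0 := by
        rwa [show MvPolynomial.eval q ((X 0 ^ 2 + X 1 ^ 2 - 25 * X 2 ^ 2) * ((X 0 - 4 * X 2) * ((X 0 + 4 * X 2) * ((3 * X 0 + 4 * X 1) * ((X 0 + 3 * X 2) * ((X 1 + 3 * X 2))))))) = (q 0 ^ 2 + q 1 ^ 2 - 25 * q 2 ^ 2) * ((q 0 - 4 * q 2) * ((q 0 + 4 * q 2) * ((3 * q 0 + 4 * q 1) * ((q 0 + 3 * q 2) * ((q 1 + 3 * q 2)))))) from by simp; try ring]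
      have hCz : (Polynomial.C (6 * q 0 + q 1 + 21 * q 2) : Polynomial ℂ) = 0 := by rw [hA5]; exact map_zero _
      simp only [map_add, map_sub, map_mul, map_ofNat] at hCz
      exact lin_second h (L := 6 * X 0 + X 1 + 21 * X 2) (R := (X 0 ^ 2 + X 1 ^ 2 - 25 * X 2 ^ 2) * ((X 0 - 4 * X 2) * ((X 0 + 4 * X 2) * ((3 * X 0 + 4 * X 1) * ((X 0 + 3 * X 2) * ((X 1 + 3 * X 2))))))) (by unfold Q1; ring) hRne ![0,1,0] 1 (by norm_num)
        (by simp [Φ, map_ofNat]; try linear_combination hCz)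
    rcases mul_eq_zero.mp h6 with hZ0 | h5
    · -- pair (5, 0)
      have hsp : (q 0 + 4 * q 2) * (37 * q 0 + 104 * q 2) = 0 := by linear_combination hZ0 - (q 1 - 6 * q 0 - 21 * q 2) * hA5
      rcases mul_eq_zero.mp hsp with hc | hc
      · exact mk_aff hq 1 (-4) 3 1 (by norm_num) (by funext j; fin_cases j <;> norm_num [show PtsZ 1 = ![(-4), 3, 1] from rfl]) (by linear_combination hc) (by linear_combination hA5 - 6 * hc)
      · exact mk_aff hq 8 (-104) (-153) 37 (by norm_num) (by funext j; fin_cases j <;> norm_num [show PtsZ 8 = ![(-104), (-153), 37] from rfl]) (by linear_combination hc) (by linear_combination 37 * hA5 - 6 * hc)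
    rcases mul_eq_zero.mp h5 with hZ1 | h4
    · -- pair (5, 1)
      exact mk_aff hq 9 4 (-45) 1 (by norm_num) (by funext j; fin_cases j <;> norm_num [show PtsZ 9 = ![4, (-45), 1] from rfl]) (by linear_combination hZ1) (by linear_combination hA5 - 6 * hZ1)
    rcases mul_eq_zero.mp h4 with hZ2 | h3
    · -- pair (5, 2)
      exact mk_aff hq 1 (-4) 3 1 (by norm_num) (by funext j; fin_cases j <;> norm_num [show PtsZ 1 = ![(-4), 3, 1] from rfl]) (by linear_combination hZ2) (by linear_combination hA5 - 6 * hZ2)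
    rcases mul_eq_zero.mp h3 with hZ3 | h2
    · -- pair (5, 3)
      have hx : q 0 + 4 * q 2 = 0 := by linear_combination (4/21) * hA5 - (1/21) * hZ3
      exact mk_aff hq 1 (-4) 3 1 (by norm_num) (by funext j; fin_cases j <;> norm_num [show PtsZ 1 = ![(-4), 3, 1] from rfl]) (by linear_combination hx) (by linear_combination (1/4) * hZ3 - (3/4) * hx)
    rcases mul_eq_zero.mp h2 with hZ4 | h1
    · -- pair (5, 4)
      exact mk_aff hq 4 (-3) (-3) 1 (by norm_num) (by funext j; fin_cases j <;> norm_num [show PtsZ 4 = ![(-3), (-3), 1] from rfl]) (by linear_combination hZ4) (by linear_combination hA5 - 6 * hZ4)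
    -- last: h1 : factor 6 = 0
    exact mk_aff hq 4 (-3) (-3) 1 (by norm_num) (by funext j; fin_cases j <;> norm_num [show PtsZ 4 = ![(-3), (-3), 1] from rfl]) (by linear_combination (1/6) * hA5 - (1/6) * h1) (by linear_combination h1)
  -- last factor 6 = 0, hyp hR5
  have h6 : (q 0 ^ 2 + q 1 ^ 2 - 25 * q 2 ^ 2) * ((q 0 - 4 * q 2) * ((q 0 + 4 * q 2) * ((3 * q 0 + 4 * q 1) * ((q 0 + 3 * q 2) * ((6 * q 0 + q 1 + 21 * q 2)))))) = 0 := by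
    by_contra hne
    have hRne : MvPolynomial.eval q ((X 0 ^ 2 + X 1 ^ 2 - 25 * X 2 ^ 2) * ((X 0 - 4 * X 2) * ((X 0 + 4 * X 2) * ((3 * X 0 + 4 * X 1) * ((X 0 + 3 * X 2) * ((6 * X 0 + X 1 + 21 * X 2))))))) ≠ 0 := by
      rwa [show MvPolynomial.eval q ((X 0 ^ 2 + X 1 ^ 2 - 25 * X 2 ^ 2) * ((X 0 - 4 * X 2) * ((X 0 + 4 * X 2) * ((3 * X 0 + 4 * X 1) * ((X 0 + 3 * X 2) * ((6 * X 0 + X 1 + 21 * X 2))))))) = (q 0 ^ 2 + q 1 ^ 2 - 25 * q 2 ^ 2) * ((q 0 - 4 * q 2) * ((q 0 + 4 * q 2) * ((3 * q 0 + 4 * q 1) * ((q 0 + 3 * q 2) * ((6 * q 0 + q 1 + 21 * q 2)))))) from by simp; try ring]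
    have hCz : (Polynomial.C (q 1 + 3 * q 2) : Polynomial ℂ) = 0 := by rw [hR5]; exact map_zero _
    simp only [map_add, map_sub, map_mul, map_ofNat] at hCz
    exact lin_second h (L := X 1 + 3 * X 2) (R := (X 0 ^ 2 + X 1 ^ 2 - 25 * X 2 ^ 2) * ((X 0 - 4 * X 2) * ((X 0 + 4 * X 2) * ((3 * X 0 + 4 * X 1) * ((X 0 + 3 * X 2) * ((6 * X 0 + X 1 + 21 * X 2))))))) (by unfold Q1; ring) hRne ![0,1,0] 1 (by norm_num)
      (by simp [Φ, map_ofNat]; try linear_combination hCz)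
  rcases mul_eq_zero.mp h6 with hZ0 | h5
  · -- pair (6, 0)
    have hsp : (q 0 - 4 * q 2) * (q 0 + 4 * q 2) = 0 := by linear_combination hZ0 - (q 1 - 3 * q 2) * hR5
    rcases mul_eq_zero.mp hsp with hc | hc
    · exact mk_aff hq 0 4 (-3) 1 (by norm_num) (by funext j; fin_cases j <;> norm_num [show PtsZ 0 = ![4, (-3), 1] from rfl]) (by linear_combination hc) (by linear_combination hR5)
    · exact mk_aff hq 2 (-4) (-3) 1 (by norm_num) (by funext j; fin_cases j <;> norm_num [show PtsZ 2 = ![(-4), (-3), 1] from rfl]) (by linear_combination hc) (by linear_combination hR5)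
  rcases mul_eq_zero.mp h5 with hZ1 | h4
  · -- pair (6, 1)
    exact mk_aff hq 0 4 (-3) 1 (by norm_num) (by funext j; fin_cases j <;> norm_num [show PtsZ 0 = ![4, (-3), 1] from rfl]) (by linear_combination hZ1) (by linear_combination hR5)
  rcases mul_eq_zero.mp h4 with hZ2 | h3
  · -- pair (6, 2)
    exact mk_aff hq 2 (-4) (-3) 1 (by norm_num) (by funext j; fin_cases j <;> norm_num [show PtsZ 2 = ![(-4), (-3), 1] from rfl]) (by linear_combination hZ2) (by linear_combination hR5)
  rcases mul_eq_zero.mp h3 with hZ3 | h2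
  · -- pair (6, 3)
    exact mk_aff hq 0 4 (-3) 1 (by norm_num) (by funext j; fin_cases j <;> norm_num [show PtsZ 0 = ![4, (-3), 1] from rfl]) (by linear_combination (1/3) * hZ3 - (4/3) * hR5) (by linear_combination hR5)
  rcases mul_eq_zero.mp h2 with hZ4 | h1
  · -- pair (6, 4)
    exact mk_aff hq 4 (-3) (-3) 1 (by norm_num) (by funext j; fin_cases j <;> norm_num [show PtsZ 4 = ![(-3), (-3), 1] from rfl]) (by linear_combination hZ4) (by linear_combination hR5)
  -- last: h1 : factor 5 = 0
  exact mk_aff hq 4 (-3) (-3) 1 (by norm_num) (by funext j; fin_cases j <;> norm_num [show PtsZ 4 = ![(-3), (-3), 1] from rfl]) (by linear_combination (1/6) * h1 - (1/6) * hR5) (by linear_combination hR5)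


theorem P2s0 : P2s 0 = ![0,5,1] := rfl
theorem P2s1 : P2s 1 = ![0,-5,1] := rfl
theorem P2s2 : P2s 2 = ![0,3,1] := rfl
theorem P2s3 : P2s 3 = ![0,-3,1] := rfl
theorem P2s4 : P2s 4 = ![0,0,1] := rfl
theorem P2s5 : P2s 5 = ![0,1,0] := rfl

theorem cross_ne : ∀ k l : Fin 6, k ≠ l →
    P2s k 1 * P2s l 2 - P2s l 1 * P2s k 2 ≠ 0 := by
  intro k l hkl
  fin_cases k <;> fin_cases l <;>
    simp_all [P2s0, P2s1, P2s2, P2s3, P2s4, P2s5] <;> norm_num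

theorem P2s_fst : ∀ k : Fin 6, P2s k 0 = 0 := by
  intro k
  fin_cases k <;> simp [P2s0, P2s1, P2s2, P2s3, P2s4, P2s5]

theorem P2s_ne : ∀ k : Fin 6, P2s k ≠ 0 := by
  intro k hk
  fin_cases k <;>
    [exact one_ne_zero (congrFun hk 2); exact one_ne_zero (congrFun hk 2);
     exact one_ne_zero (congrFun hk 2); exact one_ne_zero (congrFun hk 2);
     exact one_ne_zero (congrFun hk 2); exact one_ne_zero (congrFun hk 1)]

def d3 (u v w : Fin 3 → ℤ) : ℤ :=
  u 0 * v 1 * w 2 - u 0 * v 2 * w 1 - u 1 * v 0 * w 2 + u 1 * v 2 * w 0 +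
    u 2 * v 0 * w 1 - u 2 * v 1 * w 0

set_option maxHeartbeats 1000000 in
theorem card_line : ∀ a b : Fin 11, a ≠ b →
    ((Finset.univ.filter (fun k : Fin 11 => d3 (PtsZ a) (PtsZ b) (PtsZ k) = 0)).card ≤ 5) := by
  decide

theorem key_nonprop {s t a b a' b' : ℂ} (hs : s ≠ 0) (hx : a * b' - a' * b ≠ 0)
    (h1 : s * a = t * a') (h2 : s * b = t * b') : False := by
  have h3 : s * (a * b' - a' * b) = 0 := by linear_combination b' * h1 - a' * h2
  rcases mul_eq_zero.mp h3 with h | h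
  · exact hs h
  · exact hx h

end Stmt16

open Stmt16

/-- Q1 and Q2 are not projectively equivalent: there is no invertible linear change of
coordinates g and nonzero scalar λ with Q1 ∘ g = λ • Q2. -/
theorem stmt_16 :
    ¬ ∃ (M : Matrix (Fin 3) (Fin 3) ℂ) (lam : ℂ), IsUnit M.det ∧ lam ≠ 0 ∧
      bind₁ (fun i : Fin 3 => ∑ j : Fin 3, C (M i j) * X j) Q1 = C lam * Q2 := by
  rintro ⟨M, lam, hM, hlam, E⟩
  have hMinj : ∀ v : Fin 3 → ℂ, M.mulVec v = 0 → v = 0 := by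
    intro v hv
    have h1 := congrArg (fun u => (M⁻¹).mulVec u) hv
    simpa [Matrix.mulVec_mulVec, Matrix.nonsing_inv_mul M hM] using h1
  have hnz : ∀ k : Fin 6, M.mulVec (P2s k) ≠ 0 := by
    intro k hk
    exact P2s_ne k (hMinj _ hk)
  have hsing : ∀ k : Fin 6, SingAt Q1 (M.mulVec (P2s k)) :=
    fun k => transport hM E (sing_Q2 k)
  have hcls : ∀ k : Fin 6, ∃ (i : Fin 11) (cc : ℂ), cc ≠ 0 ∧ M.mulVec (P2s k) = cc • Pts i :=
    fun k => classify (hnz k) (hsing k)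
  choose idx cs hcs hrep using hcls
  -- the functional annihilating the images
  set α : Fin 3 → ℂ := fun j => M⁻¹ 0 j with hαdef
  have hα0 : ∀ k : Fin 6, ∑ j : Fin 3, α j * (M.mulVec (P2s k)) j = 0 := by
    intro k
    have h1 : (M⁻¹).mulVec (M.mulVec (P2s k)) = P2s k := by
      rw [Matrix.mulVec_mulVec, Matrix.nonsing_inv_mul M hM, Matrix.one_mulVec]
    have h2 := congrFun h1 0
    rw [P2s_fst k] at h2
    simpa [Matrix.mulVec, dotProduct, hαdef] using h2
  have hαP : ∀ k : Fin 6, ∑ j : Fin 3, α j * Pts (idx k) j = 0 := by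
    intro k
    have h1 := hα0 k
    rw [hrep k] at h1
    have h2 : cs k * (∑ j : Fin 3, α j * Pts (idx k) j) = 0 := by
      rw [Fin.sum_univ_three] at h1 ⊢
      simp only [Pi.smul_apply, smul_eq_mul] at h1
      linear_combination h1
    exact (mul_eq_zero.mp h2).resolve_left (hcs k)
  have hαne : α ≠ 0 := by
    intro h0
    have h1 : (M⁻¹ * M) 0 0 = 1 := by rw [Matrix.nonsing_inv_mul M hM]; simp
    rw [Matrix.mul_apply] at h1
    have h2 : ∀ j, M⁻¹ 0 j = 0 := fun j => congrFun h0 j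
    simp [h2] at h1
  -- distinct indices
  have hdist : ∀ k l : Fin 6, k ≠ l → idx k ≠ idx l := by
    intro k l hkl heq
    have h1 : M.mulVec (cs l • P2s k - cs k • P2s l) = 0 := by
      rw [Matrix.mulVec_sub, Matrix.mulVec_smul, Matrix.mulVec_smul, hrep k, hrep l, heq,
        smul_smul, smul_smul, mul_comm, sub_self]
    have h2 := hMinj _ h1
    have e1 : cs l * P2s k 1 = cs k * P2s l 1 := by
      have h3 := congrFun h2 1
      simp only [Pi.sub_apply, Pi.smul_apply, smul_eq_mul, Pi.zero_apply] at h3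
      linear_combination h3
    have e2 : cs l * P2s k 2 = cs k * P2s l 2 := by
      have h3 := congrFun h2 2
      simp only [Pi.sub_apply, Pi.smul_apply, smul_eq_mul, Pi.zero_apply] at h3
      linear_combination h3
    exact key_nonprop (hcs l) (cross_ne k l hkl) e1 e2
  -- determinants vanish
  have hdetC : ∀ k : Fin 6,
      (Matrix.of ![Pts (idx 0), Pts (idx 1), Pts (idx k)]).det = 0 := by
    intro k
    apply Matrix.exists_mulVec_eq_zero_iff.mp
    refine ⟨α, hαne, ?_⟩
    funext r
    have hP0 := hαP 0; have hP1 := hαP 1; have hPk := hαP k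
    rw [Fin.sum_univ_three] at hP0 hP1 hPk
    fin_cases r
    · simp [Matrix.mulVec, dotProduct, Fin.sum_univ_three]
      linear_combination hP0
    · simp [Matrix.mulVec, dotProduct, Fin.sum_univ_three]
      linear_combination hP1
    · simp [Matrix.mulVec, dotProduct, Fin.sum_univ_three]
      linear_combination hPk
  have hdetZ : ∀ k : Fin 6, d3 (PtsZ (idx 0)) (PtsZ (idx 1)) (PtsZ (idx k)) = 0 := by
    intro k
    have h1 := hdetC k
    rw [Matrix.det_fin_three] at h1
    simp only [Matrix.of_apply] at h1
    simp [Pts] at h1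
    have h2 : ((d3 (PtsZ (idx 0)) (PtsZ (idx 1)) (PtsZ (idx k)) : ℤ) : ℂ) = 0 := by
      rw [d3]
      push_cast
      linear_combination h1
    exact_mod_cast h2
  -- six distinct elements in a set of at most five
  have hsub : ∀ k : Fin 6, idx k ∈ Finset.univ.filter
      (fun t : Fin 11 => d3 (PtsZ (idx 0)) (PtsZ (idx 1)) (PtsZ t) = 0) := by
    intro k
    simp [hdetZ k]
  have hcard := Finset.card_le_card_of_injOn (s := (Finset.univ : Finset (Fin 6))) idx (fun k _ => hsub k)
    (fun a _ b _ hab => by by_contra hne; exact hdist a b hne hab)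
  have h5 := card_line (idx 0) (idx 1) (hdist 0 1 (by decide))
  simp only [Finset.card_univ, Fintype.card_fin] at hcard
  omega
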